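/- In the independent setting, let κ ∈ (0,1) and let π̂0 be a π0-estimator that does not depend on p-values below the capping κ, in the sense that π̂0(p) = π̂0(p') whenever for every i ∈ {1,…,m} either (p_i ≤ κ and p'_i ≤ p_i) or (p_i > κ and p'_i = p_i). Then for every α ∈ (0,1), FDR(ABH_α(π̂0,κ)) ≤ (α/m)·Σ_{i ∈ H0} E[1/π̂0(p̃^{0,i})]. -/

import Mathlib

open MeasureTheory ProbabilityTheory
open scoped ENNReal

noncomputable section

open Classical in
/-- `orderStat p k` is the `k`-th smallest value of `p` (1-indexed), with `orderStat p 0 = 0`. -/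
def orderStat {m : ℕ} (p : Fin m → ℝ) (k : ℕ) : ℝ :=
  if k = 0 then 0
  else sInf {t : ℝ | k ≤ (Finset.univ.filter fun i => p i ≤ t).card}

/-- The adaptive BH threshold sequence `t_k = min(κ, α k /(m π̂₀))`, with the
convention `1/0 = +∞` (so that the threshold is `κ` when `π̂₀ = 0`). -/
def bhThresh (m : ℕ) (α κ pi0 : ℝ) (k : ℕ) : ℝ :=
  if pi0 = 0 then κ else min κ (α * k / (m * pi0))

open Classical in
/-- Number of rejections `k̂ = max{k ∈ [0,m] : p_(k) ≤ min(κ, α k/(m π̂₀))}` of the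
adaptive BH procedure at level `α` with capping `κ` and estimated null proportion `pi0`. -/
def khat (m : ℕ) (α κ pi0 : ℝ) (p : Fin m → ℝ) : ℕ :=
  Nat.findGreatest (fun k => orderStat p k ≤ bhThresh m α κ pi0 k) m

open Classical in
/-- Rejection set of the adaptive BH procedure at level `α`, with (possibly data-driven)
capping `kap p` and null-proportion estimator `pihat`. -/
def rejectSet (m : ℕ) (α : ℝ) (pihat kap : (Fin m → ℝ) → ℝ) (p : Fin m → ℝ) :
    Finset (Fin m) :=
  Finset.univ.filter fun i =>
    p i ≤ bhThresh m α (kap p) (pihat p) (khat m α (kap p) (pihat p) p)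

open Classical in
/-- False discovery proportion of the adaptive BH procedure. -/
def FDP (m : ℕ) (H0 : Finset (Fin m)) (α : ℝ) (pihat kap : (Fin m → ℝ) → ℝ)
    (p : Fin m → ℝ) : ℝ :=
  ((H0.filter fun i =>
      p i ≤ bhThresh m α (kap p) (pihat p) (khat m α (kap p) (pihat p) p)).card : ℝ)
    / (max (khat m α (kap p) (pihat p) p) 1 : ℕ)

/-- False discovery rate of the adaptive BH procedure. -/
def FDR {Ω : Type*} [MeasurableSpace Ω] (μ : Measure Ω) (m : ℕ) (H0 : Finset (Fin m))
    (α : ℝ) (pihat kap : (Fin m → ℝ) → ℝ) (p : Ω → Fin m → ℝ) : ℝ≥0∞ :=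
  ∫⁻ ω, ENNReal.ofReal (FDP m H0 α pihat kap (p ω)) ∂μ

/-- Independent multiple-testing setting: `p`-values in `[0,1]`, mutually independent,
super-uniform under the null (`H0`). -/
def IndepSetting {Ω : Type*} [MeasurableSpace Ω] (μ : Measure Ω) (m : ℕ)
    (H0 : Finset (Fin m)) (p : Ω → Fin m → ℝ) : Prop :=
  Measurable p ∧ (∀ ω i, p ω i ∈ Set.Icc (0 : ℝ) 1) ∧
    iIndepFun (fun i ω => p ω i) μ ∧
    ∀ i ∈ H0, ∀ t ∈ Set.Icc (0 : ℝ) 1, μ {ω | p ω i ≤ t} ≤ ENNReal.ofReal t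

/-- Independent multiple-testing setting with (exactly) uniform null `p`-values. -/
def IndepUnifSetting {Ω : Type*} [MeasurableSpace Ω] (μ : Measure Ω) (m : ℕ)
    (H0 : Finset (Fin m)) (p : Ω → Fin m → ℝ) : Prop :=
  Measurable p ∧ (∀ ω i, p ω i ∈ Set.Icc (0 : ℝ) 1) ∧
    iIndepFun (fun i ω => p ω i) μ ∧
    ∀ i ∈ H0, ∀ t ∈ Set.Icc (0 : ℝ) 1, μ {ω | p ω i ≤ t} = ENNReal.ofReal t

lemma orderStat_le_iff {m : ℕ} (p : Fin m → ℝ) {k : ℕ} (hk1 : 1 ≤ k) (hkm : k ≤ m) (t : ℝ) :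
    orderStat p k ≤ t ↔ k ≤ (Finset.univ.filter fun i => p i ≤ t).card := by
  classical
  have hm0 : 0 < m := lt_of_lt_of_le hk1 hkm
  haveI : Nonempty (Fin m) := ⟨⟨0, hm0⟩⟩
  set S : Set ℝ := {s : ℝ | k ≤ (Finset.univ.filter fun i => p i ≤ s).card} with hS
  have hup : ∀ s s' : ℝ, s ∈ S → s ≤ s' → s' ∈ S := by
    intro s s' hs hss
    refine le_trans hs (Finset.card_le_card ?_)
    intro j hj
    simp only [Finset.mem_filter] at hj ⊢
    exact ⟨hj.1, le_trans hj.2 hss⟩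
  have hne : S.Nonempty := by
    refine ⟨Finset.univ.sup' Finset.univ_nonempty p, ?_⟩
    have : (Finset.univ.filter fun i => p i ≤ Finset.univ.sup' Finset.univ_nonempty p) =
        Finset.univ := by
      refine Finset.eq_univ_iff_forall.2 fun j => ?_
      simp only [Finset.mem_filter, Finset.mem_univ, true_and]
      exact Finset.le_sup' p (Finset.mem_univ j)
    simp only [hS, Set.mem_setOf_eq, this, Finset.card_univ, Fintype.card_fin]
    exact hkm
  have hbdd : BddBelow S := by
    refine ⟨Finset.univ.inf' Finset.univ_nonempty p, fun s hs => ?_⟩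
    have hpos : 0 < (Finset.univ.filter fun i => p i ≤ s).card := lt_of_lt_of_le hk1 hs
    obtain ⟨j, hj⟩ := Finset.card_pos.1 hpos
    simp only [Finset.mem_filter] at hj
    exact le_trans (Finset.inf'_le p (Finset.mem_univ j)) hj.2
  have hmem : sInf S ∈ S := by
    by_contra hc
    simp only [hS, Set.mem_setOf_eq, not_le] at hc
    set A : Finset (Fin m) := Finset.univ.filter fun j => sInf S < p j with hA
    have hAne : A.Nonempty := by
      rcases Finset.eq_empty_or_nonempty A with hAe | hAne
      · exfalso
        have : (Finset.univ.filter fun i => p i ≤ sInf S) = Finset.univ := by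
          refine Finset.eq_univ_iff_forall.2 fun j => ?_
          simp only [Finset.mem_filter, Finset.mem_univ, true_and]
          by_contra hj
          have : j ∈ A := by simp [hA, lt_of_not_ge hj]
          simp [hAe] at this
        rw [this] at hc
        simp only [Finset.card_univ, Fintype.card_fin] at hc
        exact absurd hkm (not_le.2 hc)
      · exact hAne
    set ε : ℝ := A.inf' hAne p - sInf S with hε
    have hεpos : 0 < ε := by
      have : sInf S < A.inf' hAne p := by
        rw [Finset.lt_inf'_iff]
        intro j hj
        simp only [hA, Finset.mem_filter] at hj
        exact hj.2
      linarith
    obtain ⟨s, hsS, hs⟩ := exists_lt_of_csInf_lt hne (show sInf S < sInf S + ε by linarith)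
    have hsub : (Finset.univ.filter fun i => p i ≤ s) ⊆
        Finset.univ.filter fun i => p i ≤ sInf S := by
      intro j hj
      simp only [Finset.mem_filter, Finset.mem_univ, true_and] at hj ⊢
      by_contra hj2
      have hjA : j ∈ A := by simp [hA, lt_of_not_ge hj2]
      have : A.inf' hAne p ≤ p j := Finset.inf'_le p hjA
      have : sInf S + ε ≤ p j := by simp only [hε] at *; linarith
      linarith
    have : k ≤ (Finset.univ.filter fun i => p i ≤ sInf S).card :=
      le_trans hsS (Finset.card_le_card hsub)
    exact absurd this (not_le.2 hc)
  have hkne : k ≠ 0 := Nat.one_le_iff_ne_zero.1 hk1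
  constructor
  · intro h
    rw [orderStat, if_neg hkne] at h
    exact hup _ _ hmem h
  · intro h
    rw [orderStat, if_neg hkne]
    exact csInf_le hbdd h

lemma orderStat_mono_fun {m : ℕ} {q q' : Fin m → ℝ} (h : ∀ j, q' j ≤ q j) (k : ℕ) :
    orderStat q' k ≤ orderStat q k := by
  classical
  rcases Nat.eq_zero_or_pos k with rfl | hk1
  · simp [orderStat]
  rcases le_or_gt k m with hkm | hkm
  · rw [orderStat_le_iff q' hk1 hkm]
    have h1 : k ≤ (Finset.univ.filter fun i => q i ≤ orderStat q k).card :=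
      (orderStat_le_iff q hk1 hkm _).1 le_rfl
    refine le_trans h1 (Finset.card_le_card ?_)
    intro j hj
    simp only [Finset.mem_filter] at hj ⊢
    exact ⟨hj.1, le_trans (h j) hj.2⟩
  · have he : ∀ r : Fin m → ℝ, orderStat r k = 0 := by
      intro r
      rw [orderStat, if_neg (Nat.one_le_iff_ne_zero.1 hk1)]
      have : {t : ℝ | k ≤ (Finset.univ.filter fun i => r i ≤ t).card} = ∅ := by
        refine Set.eq_empty_iff_forall_notMem.2 fun t ht => ?_
        simp only [Set.mem_setOf_eq] at ht
        have : (Finset.univ.filter fun i => r i ≤ t).card ≤ m :=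
          le_trans (Finset.card_le_card (Finset.filter_subset _ _)) (by simp)
        omega
      rw [this, Real.sInf_empty]
    simp [he]

lemma bhThresh_nonneg {m : ℕ} {α κ pi0 : ℝ} (hκ : 0 ≤ κ) (hα : 0 ≤ α) (hπ : 0 ≤ pi0) (k : ℕ) :
    0 ≤ bhThresh m α κ pi0 k := by
  rw [bhThresh]
  split
  · exact hκ
  · exact le_min hκ (div_nonneg (mul_nonneg hα (Nat.cast_nonneg k))
      (mul_nonneg (Nat.cast_nonneg m) hπ))

lemma bhThresh_le_kappa {m : ℕ} {α κ pi0 : ℝ} (k : ℕ) : bhThresh m α κ pi0 k ≤ κ := by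
  rw [bhThresh]; split
  · exact le_rfl
  · exact min_le_left _ _

lemma bhThresh_mono {m : ℕ} {α κ pi0 : ℝ} (hα : 0 ≤ α) (hπ : 0 ≤ pi0) :
    Monotone (bhThresh m α κ pi0) := by
  intro k l hkl
  rw [bhThresh, bhThresh]
  split
  · exact le_rfl
  · refine min_le_min le_rfl ?_
    rcases eq_or_lt_of_le (mul_nonneg (Nat.cast_nonneg m) hπ) with he | hpos
    · rw [← he]; simp
    · rw [div_eq_mul_inv, div_eq_mul_inv]
      exact mul_le_mul_of_nonneg_right
        (mul_le_mul_of_nonneg_left (Nat.cast_le.2 hkl) hα)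
        (inv_nonneg.2 (le_of_lt hpos))



lemma khat_eq_update {m : ℕ} (hm : 1 ≤ m) {α κ : ℝ} (hκ : 0 < κ) (hα : 0 < α)
    {pihat : (Fin m → ℝ) → ℝ} (hpinn : ∀ q, 0 ≤ pihat q)
    (hcap : ∀ q q' : Fin m → ℝ,
      (∀ i, (q i ≤ κ ∧ q' i ≤ q i) ∨ (κ < q i ∧ q' i = q i)) → pihat q = pihat q')
    (q : Fin m → ℝ) (hq : ∀ j, q j ∈ Set.Icc (0 : ℝ) 1) (i : Fin m)
    (hrej : q i ≤ bhThresh m α κ (pihat q) (khat m α κ (pihat q) q)) :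
    pihat q = pihat (Function.update q i 0) ∧
    khat m α κ (pihat q) q =
      khat m α κ (pihat (Function.update q i 0)) (Function.update q i 0) := by
  classical
  set q' := Function.update q i 0 with hq'
  have hq'le : ∀ j, q' j ≤ q j := by
    intro j
    rw [hq', Function.update_apply]
    split
    · rename_i h; subst h; exact (hq j).1
    · exact le_rfl
  have hπeq : pihat q = pihat q' := by
    refine hcap q q' fun j => ?_
    by_cases hj : q j ≤ κ
    · exact Or.inl ⟨hj, hq'le j⟩
    · refine Or.inr ⟨lt_of_not_ge hj, ?_⟩
      rw [hq', Function.update_apply, if_neg]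
      rintro rfl
      exact hj (le_trans hrej (bhThresh_le_kappa _))
  refine ⟨hπeq, le_antisymm ?_ ?_⟩
  · rw [← hπeq]
    exact Nat.findGreatest_mono
      (fun k hk => le_trans (orderStat_mono_fun hq'le k) hk) le_rfl
  · rw [← hπeq]
    set π := pihat q
    set K := khat m α κ π q' with hK
    have hKm : K ≤ m := Nat.findGreatest_le m
    rcases Nat.eq_zero_or_pos K with hK0 | hK1
    · simp [hK0]
    refine Nat.le_findGreatest hKm ?_
    have hPK : orderStat q' K ≤ bhThresh m α κ π K := by
      rw [hK, khat] at *
      exact (Nat.findGreatest_eq_iff.1 rfl).2.1 (Nat.pos_iff_ne_zero.1 hK1)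
    set t := bhThresh m α κ π K with ht
    have htnn : 0 ≤ t := bhThresh_nonneg (le_of_lt hκ) (le_of_lt hα) (hpinn q) K
    have hkhatK : khat m α κ π q ≤ K := by
      rw [hK]
      exact Nat.findGreatest_mono
        (fun k hk => le_trans (orderStat_mono_fun hq'le k) hk) le_rfl
    have hqit : q i ≤ t :=
      le_trans hrej (bhThresh_mono (le_of_lt hα) (hpinn q) hkhatK)
    have hcards : (Finset.univ.filter fun j => q' j ≤ t) =
        Finset.univ.filter fun j => q j ≤ t := by
      ext j
      simp only [Finset.mem_filter, Finset.mem_univ, true_and, hq', Function.update_apply]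
      split
      · rename_i h; subst h; exact ⟨fun _ => hqit, fun _ => htnn⟩
      · rfl
    have hcard : K ≤ (Finset.univ.filter fun j => q j ≤ t).card := by
      rw [← hcards]
      exact (orderStat_le_iff q' hK1 hKm t).1 hPK
    exact (orderStat_le_iff q hK1 hKm t).2 hcard

lemma khat_pos {m : ℕ} (hm : 1 ≤ m) {α κ : ℝ} (hκ : 0 < κ) (hα : 0 ≤ α) {pi0 : ℝ}
    (hπ : 0 ≤ pi0) {q : Fin m → ℝ} (i : Fin m) (hqi : q i ≤ 0) :
    1 ≤ khat m α κ pi0 q := by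
  classical
  refine Nat.le_findGreatest hm ?_
  rw [orderStat_le_iff q le_rfl hm]
  have : i ∈ Finset.univ.filter fun j => q j ≤ bhThresh m α κ pi0 1 := by
    simp only [Finset.mem_filter, Finset.mem_univ, true_and]
    exact le_trans hqi (bhThresh_nonneg (le_of_lt hκ) hα hπ 1)
  exact Finset.card_pos.2 ⟨i, this⟩

/-- The pointwise bound: on the rejection event, the FDP contribution of `i` is bounded by
the leave-one-out quantity. -/
lemma pointwise_bound {m : ℕ} (hm : 1 ≤ m) {α κ : ℝ} (hκ : 0 < κ) (hα : 0 < α)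
    {pihat : (Fin m → ℝ) → ℝ} (hpinn : ∀ q, 0 ≤ pihat q)
    (hcap : ∀ q q' : Fin m → ℝ,
      (∀ i, (q i ≤ κ ∧ q' i ≤ q i) ∨ (κ < q i ∧ q' i = q i)) → pihat q = pihat q')
    (q : Fin m → ℝ) (hq : ∀ j, q j ∈ Set.Icc (0 : ℝ) 1) (i : Fin m)
    (hπ : pihat (Function.update q i 0) ≠ 0) :
    (if q i ≤ bhThresh m α κ (pihat q) (khat m α κ (pihat q) q) then (1 : ℝ≥0∞) else 0) *
        ((max (khat m α κ (pihat q) q) 1 : ℕ) : ℝ≥0∞)⁻¹ ≤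
      Set.indicator
        (Set.Iic (α * (khat m α κ (pihat (Function.update q i 0)) (Function.update q i 0)) /
          (m * pihat (Function.update q i 0))))
        (fun _ => ((khat m α κ (pihat (Function.update q i 0)) (Function.update q i 0) :
          ℕ) : ℝ≥0∞)⁻¹) (q i) := by
  classical
  by_cases hrej : q i ≤ bhThresh m α κ (pihat q) (khat m α κ (pihat q) q)
  swap
  · rw [if_neg hrej, zero_mul]
    exact zero_le
  obtain ⟨hπeq, hkeq⟩ := khat_eq_update hm hκ hα hpinn hcap q hq i hrej
  set q' := Function.update q i 0 with hq'
  set k := khat m α κ (pihat q) q with hk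
  have hk1 : 1 ≤ khat m α κ (pihat q') q' := by
    refine khat_pos hm hκ (le_of_lt hα) (hpinn q') i ?_
    rw [hq']; simp
  have hk1' : 1 ≤ k := hkeq ▸ hk1
  have hπpos : 0 < pihat q' := lt_of_le_of_ne (hpinn q') (Ne.symm hπ)
  have hmem : q i ∈ Set.Iic (α * (khat m α κ (pihat q') q') / (m * pihat q')) := by
    rw [Set.mem_Iic, ← hkeq, ← hπeq]
    refine le_trans hrej ?_
    rw [bhThresh, if_neg (hπeq ▸ hπ)]
    exact min_le_right _ _
  rw [if_pos hrej, one_mul, Set.indicator_of_mem hmem, max_eq_left hk1', hkeq]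

lemma bhThresh_measurable {m : ℕ} (α κ : ℝ) {pihat : (Fin m → ℝ) → ℝ}
    (hpi : Measurable pihat) {kf : (Fin m → ℝ) → ℕ} (hkf : Measurable kf) :
    Measurable fun y => bhThresh m α κ (pihat y) (kf y) := by
  have : (fun y => bhThresh m α κ (pihat y) (kf y)) =
      fun y => if pihat y = 0 then κ else min κ (α * (kf y) / (m * pihat y)) := by
    funext y; rw [bhThresh]
  rw [this]
  refine Measurable.ite (hpi (measurableSet_singleton 0)) measurable_const ?_
  refine measurable_const.min (Measurable.div ?_ ?_)
  · exact measurable_const.mul ((measurable_from_top (f := (Nat.cast : ℕ → ℝ))).comp hkf)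
  · exact measurable_const.mul hpi

open Classical in
lemma khat_measurable {m : ℕ} (α κ : ℝ) {pihat : (Fin m → ℝ) → ℝ}
    (hpi : Measurable pihat) :
    Measurable fun y : Fin m → ℝ => khat m α κ (pihat y) y := by
  have hbh : ∀ k : ℕ, Measurable fun y => bhThresh m α κ (pihat y) k := by
    intro k
    exact bhThresh_measurable α κ hpi (measurable_const : Measurable fun _ => k)
  refine measurable_findGreatest fun k hk => ?_
  rcases Nat.eq_zero_or_pos k with rfl | hk1
  · have : {y : Fin m → ℝ | orderStat y 0 ≤ bhThresh m α κ (pihat y) 0} =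
        {y | (0 : ℝ) ≤ bhThresh m α κ (pihat y) 0} := by
      ext y; simp [orderStat]
    rw [this]
    exact measurableSet_le measurable_const (hbh 0)
  · have : {y : Fin m → ℝ | orderStat y k ≤ bhThresh m α κ (pihat y) k} =
        {y | k ≤ (Finset.univ.filter fun i => y i ≤ bhThresh m α κ (pihat y) k).card} := by
      ext y; exact orderStat_le_iff y hk1 hk _
    rw [this]
    have hN : Measurable fun y : Fin m → ℝ =>
        (Finset.univ.filter fun i => y i ≤ bhThresh m α κ (pihat y) k).card := by
      have : (fun y : Fin m → ℝ =>
          (Finset.univ.filter fun i => y i ≤ bhThresh m α κ (pihat y) k).card) =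
          fun y => ∑ i : Fin m, if y i ≤ bhThresh m α κ (pihat y) k then 1 else 0 := by
        funext y; rw [Finset.card_filter]
      rw [this]
      refine Finset.measurable_sum _ fun i _ => ?_
      exact Measurable.ite (measurableSet_le (measurable_pi_apply i) (hbh k))
        measurable_const measurable_const
    exact hN (MeasurableSpace.measurableSet_top)

lemma inner_bound {m : ℕ} (hm : 1 ≤ m) {α : ℝ} (hα : 0 < α) (ν : Measure ℝ)
    (hν : ∀ t : ℝ, ν (Set.Iic t) ≤ ENNReal.ofReal t) {π : ℝ} (hπ : 0 ≤ π) (k : ℕ) :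
    ((k : ℝ≥0∞))⁻¹ * ν (Set.Iic (α * k / (m * π))) ≤
      ENNReal.ofReal (α / m) * (ENNReal.ofReal π)⁻¹ := by
  have hmp : (0 : ℝ) < m := by exact_mod_cast hm
  rcases Nat.eq_zero_or_pos k with rfl | hk1
  · have : ν (Set.Iic (α * (0 : ℕ) / (m * π))) = 0 := by
      refine le_antisymm (le_trans (hν _) ?_) (zero_le)
      simp
    rw [this, mul_zero]
    exact zero_le
  rcases eq_or_lt_of_le hπ with rfl | hπpos
  · have h1 : (ENNReal.ofReal (0 : ℝ))⁻¹ = ⊤ := by simp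
    have h2 : ENNReal.ofReal (α / m) ≠ 0 := by
      refine (ENNReal.ofReal_pos.2 (div_pos hα hmp)).ne'
    rw [h1, ENNReal.mul_top h2]
    exact le_top
  · refine le_trans (mul_le_mul_right (hν _) _) ?_
    have harith : α * k / (m * π) = (k : ℝ) * (α / m * π⁻¹) := by
      field_simp
    rw [harith, ENNReal.ofReal_mul (Nat.cast_nonneg k), ENNReal.ofReal_natCast,
      ← mul_assoc, ENNReal.inv_mul_cancel (by exact_mod_cast hk1.ne')
        (ENNReal.natCast_ne_top k), one_mul,
      ENNReal.ofReal_mul (le_of_lt (div_pos hα hmp)),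
      ENNReal.ofReal_inv_of_pos hπpos]

open Classical in
lemma fdp_decomp {m : ℕ} (H0 : Finset (Fin m)) (α κ : ℝ) (pihat : (Fin m → ℝ) → ℝ)
    (q : Fin m → ℝ) :
    ENNReal.ofReal (FDP m H0 α pihat (fun _ => κ) q) =
      ∑ i ∈ H0, (if q i ≤ bhThresh m α κ (pihat q) (khat m α κ (pihat q) q) then (1 : ℝ≥0∞)
          else 0) * ((max (khat m α κ (pihat q) q) 1 : ℕ) : ℝ≥0∞)⁻¹ := by
  classical
  have hFDP : FDP m H0 α pihat (fun _ => κ) q =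
      ((H0.filter fun i =>
        q i ≤ bhThresh m α κ (pihat q) (khat m α κ (pihat q) q)).card : ℝ)
      / (max (khat m α κ (pihat q) q) 1 : ℕ) := rfl
  rw [hFDP]
  set k := khat m α κ (pihat q) q
  have hdpos : (0 : ℝ) < ((max k 1 : ℕ) : ℝ) := by
    have : 0 < max k 1 := lt_of_lt_of_le Nat.zero_lt_one (le_max_right k 1)
    exact_mod_cast this
  rw [div_eq_mul_inv, ENNReal.ofReal_mul (Nat.cast_nonneg _),
    ENNReal.ofReal_inv_of_pos hdpos, ENNReal.ofReal_natCast, ENNReal.ofReal_natCast,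
    Finset.card_filter, Nat.cast_sum, Finset.sum_mul]
  refine Finset.sum_congr rfl fun i _ => ?_
  split <;> simp

lemma per_i {Ω : Type*} [MeasurableSpace Ω] (μ : Measure Ω) [IsProbabilityMeasure μ]
    (m : ℕ) (hm : 1 ≤ m) (H0 : Finset (Fin m)) (p : Ω → Fin m → ℝ)
    (hsetting : IndepSetting μ m H0 p)
    (κ : ℝ) (hκ : κ ∈ Set.Ioo (0 : ℝ) 1)
    (pihat : (Fin m → ℝ) → ℝ) (hpihat_meas : Measurable pihat)
    (hpihat_nonneg : ∀ q, 0 ≤ pihat q)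
    (hcap : ∀ q q' : Fin m → ℝ,
      (∀ i, (q i ≤ κ ∧ q' i ≤ q i) ∨ (κ < q i ∧ q' i = q i)) → pihat q = pihat q')
    (α : ℝ) (hα : α ∈ Set.Ioo (0 : ℝ) 1) (i : Fin m) (hi : i ∈ H0) :
    ∫⁻ ω, (if p ω i ≤ bhThresh m α κ (pihat (p ω)) (khat m α κ (pihat (p ω)) (p ω))
        then (1 : ℝ≥0∞) else 0) *
        ((max (khat m α κ (pihat (p ω)) (p ω)) 1 : ℕ) : ℝ≥0∞)⁻¹ ∂μ ≤
      ENNReal.ofReal (α / m) *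
        ∫⁻ ω, (ENNReal.ofReal (pihat (Function.update (p ω) i 0)))⁻¹ ∂μ := by
  classical
  obtain ⟨hp, hval, hindep, hsup0⟩ := hsetting
  have hmp : (0 : ℝ) < m := by exact_mod_cast hm
  have hconst_ne : ENNReal.ofReal (α / m) ≠ 0 :=
    (ENNReal.ofReal_pos.2 (div_pos hα.1 hmp)).ne'
  set X : Ω → ℝ := fun ω => p ω i with hXdef
  set Y : Ω → (Fin m → ℝ) := fun ω => Function.update (p ω) i 0 with hYdef
  have hX : Measurable X := (measurable_pi_apply i).comp hp
  have hY : Measurable Y := by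
    refine measurable_pi_lambda _ fun j => ?_
    have : (fun ω => Y ω j) = fun ω => if j = i then 0 else p ω j := by
      funext ω; rw [hYdef]; simp [Function.update_apply]
    rw [this]
    by_cases h : j = i
    · simp only [h, if_pos rfl]; exact measurable_const
    · simp only [if_neg h]; exact (measurable_pi_apply j).comp hp
  have hsup : ∀ t : ℝ, μ {ω | p ω i ≤ t} ≤ ENNReal.ofReal t := by
    intro t
    rcases le_or_gt 0 t with h0 | h0
    · rcases le_or_gt t 1 with h1 | h1
      · exact hsup0 i hi t ⟨h0, h1⟩
      · refine le_trans prob_le_one ?_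
        rw [show (1 : ℝ≥0∞) = ENNReal.ofReal 1 by simp]
        exact ENNReal.ofReal_le_ofReal (le_of_lt h1)
    · have : {ω | p ω i ≤ t} = ∅ := by
        refine Set.eq_empty_iff_forall_notMem.2 fun ω hω => ?_
        simp only [Set.mem_setOf_eq] at hω
        linarith [(hval ω i).1]
      rw [this]; simp
  set K : (Fin m → ℝ) → ℕ := fun y => khat m α κ (pihat y) y with hKdef
  have hK : Measurable K := khat_measurable α κ hpihat_meas
  set r : (Fin m → ℝ) → ℝ := fun y => α * (K y) / (m * pihat y) with hrdef
  have hr : Measurable r := by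
    refine Measurable.div ?_ (measurable_const.mul hpihat_meas)
    exact measurable_const.mul ((measurable_from_top (f := (Nat.cast : ℕ → ℝ))).comp hK)
  set Φ : (Fin m → ℝ) × ℝ → ℝ≥0∞ := fun z =>
    Set.indicator (Set.Iic (r z.1)) (fun _ => ((K z.1 : ℕ) : ℝ≥0∞)⁻¹) z.2 with hΦdef
  have hΦ : Measurable Φ := by
    have : Φ = fun z => if z.2 ≤ r z.1 then ((K z.1 : ℕ) : ℝ≥0∞)⁻¹ else 0 := by
      funext z; rw [hΦdef]; simp [Set.indicator_apply]
    rw [this]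
    refine Measurable.ite (measurableSet_le measurable_snd (hr.comp measurable_fst)) ?_
      measurable_const
    exact ((measurable_from_top (f := fun n : ℕ => ((n : ℕ) : ℝ≥0∞)⁻¹)).comp
      (hK.comp measurable_fst))
  have hfmeas : Measurable fun y : Fin m → ℝ => (ENNReal.ofReal (pihat y))⁻¹ :=
    (ENNReal.measurable_ofReal.comp hpihat_meas).inv
  set Z : Set Ω := {ω | pihat (Y ω) = 0} with hZdef
  have hZm : MeasurableSet Z := (hpihat_meas.comp hY) (measurableSet_singleton 0)
  rcases eq_or_ne (μ Z) 0 with hZ | hZ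
  · -- a.e. pihat(Y ω) ≠ 0
    have hae : ∀ᵐ ω ∂μ, pihat (Y ω) ≠ 0 := by
      rw [ae_iff]
      simpa using hZ
    have hIndepYX : IndepFun Y X μ := by
      have h1 := hindep.indepFun_finset ({i}ᶜ) {i} disjoint_compl_left
        (fun j => (measurable_pi_apply j).comp hp)
      set G : ((({i}ᶜ : Finset (Fin m)) : Finset (Fin m)) → ℝ) → (Fin m → ℝ) :=
        fun v j => if h : j = i then 0
          else v ⟨j, by simp [Finset.mem_compl, h]⟩ with hGdef
      have hG : Measurable G := by
        refine measurable_pi_lambda _ fun j => ?_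
        by_cases h : j = i
        · simp only [hGdef, h, dif_pos]; exact measurable_const
        · simp only [hGdef, dif_neg h]; exact measurable_pi_apply _
      set E : ((({i} : Finset (Fin m)) : Finset (Fin m)) → ℝ) → ℝ :=
        fun v => v ⟨i, Finset.mem_singleton_self i⟩ with hEdef
      have hE : Measurable E := measurable_pi_apply _
      have h2 := h1.comp hG hE
      have hYeq : (G ∘ fun a (j : ({i}ᶜ : Finset (Fin m))) => p a j) = Y := by
        funext a
        funext j
        rw [hYdef]
        simp only [Function.comp_apply, hGdef, Function.update_apply]
        by_cases h : j = i
        · simp [h]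
        · simp [h]
      have hXeq : (E ∘ fun a (j : ({i} : Finset (Fin m))) => p a j) = X := by
        funext a; rfl
      rwa [hYeq, hXeq] at h2
    have hmap : μ.map (fun ω => (Y ω, X ω)) = (μ.map Y).prod (μ.map X) :=
      (indepFun_iff_map_prod_eq_prod_map_map hY.aemeasurable hX.aemeasurable).mp hIndepYX
    haveI : IsProbabilityMeasure (μ.map X) := Measure.isProbabilityMeasure_map hX.aemeasurable
    haveI : IsProbabilityMeasure (μ.map Y) := Measure.isProbabilityMeasure_map hY.aemeasurable
    have hsupmap : ∀ t : ℝ, (μ.map X) (Set.Iic t) ≤ ENNReal.ofReal t := by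
      intro t
      rw [Measure.map_apply hX measurableSet_Iic]
      exact hsup t
    calc
      ∫⁻ ω, (if p ω i ≤ bhThresh m α κ (pihat (p ω)) (khat m α κ (pihat (p ω)) (p ω))
            then (1 : ℝ≥0∞) else 0) *
          ((max (khat m α κ (pihat (p ω)) (p ω)) 1 : ℕ) : ℝ≥0∞)⁻¹ ∂μ
          ≤ ∫⁻ ω, Φ (Y ω, X ω) ∂μ := by
        refine lintegral_mono_ae (hae.mono fun ω hω => ?_)
        exact pointwise_bound hm hκ.1 hα.1 hpihat_nonneg hcap (p ω) (hval ω) i hω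
      _ = ∫⁻ z, Φ z ∂(μ.map (fun ω => (Y ω, X ω))) :=
        (lintegral_map hΦ (hY.prodMk hX)).symm
      _ = ∫⁻ z, Φ z ∂((μ.map Y).prod (μ.map X)) := by rw [hmap]
      _ = ∫⁻ y, ∫⁻ x, Φ (y, x) ∂(μ.map X) ∂(μ.map Y) := lintegral_prod Φ hΦ.aemeasurable
      _ ≤ ∫⁻ y, ENNReal.ofReal (α / m) * (ENNReal.ofReal (pihat y))⁻¹ ∂(μ.map Y) := by
        refine lintegral_mono fun y => ?_
        have hinner : ∫⁻ x, Φ (y, x) ∂(μ.map X) =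
            ((K y : ℕ) : ℝ≥0∞)⁻¹ * (μ.map X) (Set.Iic (r y)) := by
          simp only [hΦdef]
          exact lintegral_indicator_const measurableSet_Iic _
        rw [hinner]
        exact inner_bound hm hα.1 (μ.map X) hsupmap (hpihat_nonneg y) (K y)
      _ = ENNReal.ofReal (α / m) * ∫⁻ y, (ENNReal.ofReal (pihat y))⁻¹ ∂(μ.map Y) :=
        lintegral_const_mul _ hfmeas
      _ = ENNReal.ofReal (α / m) *
          ∫⁻ ω, (ENNReal.ofReal (pihat (Y ω)))⁻¹ ∂μ := by
        rw [lintegral_map hfmeas hY]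
  · -- the estimator vanishes with positive probability: RHS is infinite
    have htop : ∫⁻ ω, (ENNReal.ofReal (pihat (Y ω)))⁻¹ ∂μ = ⊤ := by
      rw [eq_top_iff]
      calc (⊤ : ℝ≥0∞) = ⊤ * μ Z := (ENNReal.top_mul hZ).symm
        _ = ∫⁻ ω, Z.indicator (fun _ => (⊤ : ℝ≥0∞)) ω ∂μ :=
          (lintegral_indicator_const hZm _).symm
        _ ≤ ∫⁻ ω, (ENNReal.ofReal (pihat (Y ω)))⁻¹ ∂μ := by
          refine lintegral_mono fun ω => ?_
          by_cases hω : ω ∈ Z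
          · rw [Set.indicator_of_mem hω]
            have : pihat (Y ω) = 0 := hω
            rw [this]
            simp
          · rw [Set.indicator_of_notMem hω]
            exact zero_le
    have : ENNReal.ofReal (α / m) *
        ∫⁻ ω, (ENNReal.ofReal (pihat (Function.update (p ω) i 0)))⁻¹ ∂μ = ⊤ := by
      have : ∫⁻ ω, (ENNReal.ofReal (pihat (Function.update (p ω) i 0)))⁻¹ ∂μ = ⊤ := htop
      rw [this, ENNReal.mul_top hconst_ne]
    rw [this]
    exact le_top

/-- Theorem 1(ii), independent setting: if the null-proportion estimator
`pihat` does not depend on the `p`-values below the capping `κ`, then the adaptive BH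
procedure with capping `κ` satisfies
`FDR(ABH_α(π̂₀,κ)) ≤ (α/m) Σ_{i ∈ H0} E[1/π̂₀(p̃^{0,i})]`. -/
theorem statement1 {Ω : Type*} [MeasurableSpace Ω] (μ : Measure Ω) [IsProbabilityMeasure μ]
    (m : ℕ) (hm : 1 ≤ m) (H0 : Finset (Fin m)) (p : Ω → Fin m → ℝ)
    (hsetting : IndepSetting μ m H0 p)
    (κ : ℝ) (hκ : κ ∈ Set.Ioo (0 : ℝ) 1)
    (pihat : (Fin m → ℝ) → ℝ) (hpihat_meas : Measurable pihat)
    (hpihat_nonneg : ∀ q, 0 ≤ pihat q)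
    (hcap : ∀ q q' : Fin m → ℝ,
      (∀ i, (q i ≤ κ ∧ q' i ≤ q i) ∨ (κ < q i ∧ q' i = q i)) → pihat q = pihat q')
    (α : ℝ) (hα : α ∈ Set.Ioo (0 : ℝ) 1) :
    FDR μ m H0 α pihat (fun _ => κ) p ≤
      ENNReal.ofReal (α / m) *
        ∑ i ∈ H0, ∫⁻ ω, (ENNReal.ofReal (pihat (Function.update (p ω) i 0)))⁻¹ ∂μ := by
  classical
  obtain ⟨hp, hval, hindep, hsup0⟩ := hsetting
  have hK : Measurable fun y : Fin m → ℝ => khat m α κ (pihat y) y :=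
    khat_measurable α κ hpihat_meas
  have hT : Measurable fun y : Fin m → ℝ =>
      bhThresh m α κ (pihat y) (khat m α κ (pihat y) y) :=
    bhThresh_measurable α κ hpihat_meas hK
  have hmeas : ∀ i : Fin m, Measurable fun ω =>
      (if p ω i ≤ bhThresh m α κ (pihat (p ω)) (khat m α κ (pihat (p ω)) (p ω))
        then (1 : ℝ≥0∞) else 0) *
      ((max (khat m α κ (pihat (p ω)) (p ω)) 1 : ℕ) : ℝ≥0∞)⁻¹ := by
    intro i
    refine Measurable.mul ?_ ?_
    · exact Measurable.ite
        (measurableSet_le ((measurable_pi_apply i).comp hp) (hT.comp hp))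
        measurable_const measurable_const
    · exact (measurable_from_top (f := fun n : ℕ => ((max n 1 : ℕ) : ℝ≥0∞)⁻¹)).comp
        ((hK.comp hp))
  have hFDR : FDR μ m H0 α pihat (fun _ => κ) p =
      ∑ i ∈ H0, ∫⁻ ω,
        (if p ω i ≤ bhThresh m α κ (pihat (p ω)) (khat m α κ (pihat (p ω)) (p ω))
          then (1 : ℝ≥0∞) else 0) *
        ((max (khat m α κ (pihat (p ω)) (p ω)) 1 : ℕ) : ℝ≥0∞)⁻¹ ∂μ := by
    rw [FDR]
    rw [lintegral_congr fun ω => fdp_decomp H0 α κ pihat (p ω)]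
    exact lintegral_finset_sum _ fun i _ => hmeas i
  rw [hFDR, Finset.mul_sum]
  refine Finset.sum_le_sum fun i hi => ?_
  exact per_i μ m hm H0 p ⟨hp, hval, hindep, hsup0⟩ κ hκ pihat hpihat_meas hpihat_nonneg
    hcap α hα i hi

end
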